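/- Let θ be a real-valued arithmetic function with θ(1) ≥ 2 and θ(n) ≥ n, let χ be the characteristic function of the set B_θ. Then for every complex s with Re(s) > 1, one has 1 = ∑_{n≥1} χ(n) n^{-s} ∏_{p ≤ θ(n)} (1 − p^{-s}), where the product runs over primes p. -/

import Mathlib

open scoped Classical

/-- Membership in the set `B_θ`. -/
def InB (θ : ℕ → ℝ) (n : ℕ) : Prop :=
  0 < n ∧ ∀ p ∈ n.primeFactors,
    (p : ℝ) ≤ θ (∏ q ∈ n.primeFactors.filter (· < p), q ^ n.factorization q)

/-- The finite set of primes `p ≤ x`. -/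
noncomputable def primesLe (x : ℝ) : Finset ℕ :=
  (Finset.range (⌊x⌋₊ + 1)).filter fun p => p.Prime ∧ (p : ℝ) ≤ x

open Finset

/-!
Expanding each product, the right-hand side becomes a sum over pairs `(n, S)`, with `n ∈ B_θ` and
`S` a set of primes `p ≤ θ(n)`, of `(-1)^|S| (n ∏ S)^{-s}`. For `m = n ∏ S > 1` with largest prime
factor `q`, moving `q` from `S` into `n` (if `q ∈ S`) or from `n` into `S` (otherwise) is an
involution that preserves `m` and flips the sign: when `q` is at least every prime factor of `n`,
`n q ∈ B_θ` iff `n ∈ B_θ` and `q ≤ θ(n)`, the latter being automatic when `q ∣ n` since then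
`q ≤ n ≤ θ(n)`. Hence all terms cancel except the one of `(1, ∅)`.
-/

theorem tsum_eq_zero_of_involutive {α M : Type*} [AddCommGroup M] [TopologicalSpace M]
    [IsTopologicalAddGroup M] [T2Space M] [IsAddTorsionFree M] {f : α → M} {σ : α → α}
    (hσ : Function.Involutive σ) (hf : ∀ x, f (σ x) = -f x) : ∑' x, f x = 0 := by
  have h := (hσ.toPerm σ).tsum_eq f
  simp only [Function.Involutive.coe_toPerm, hf, tsum_neg] at h
  exact neg_eq_self.mp h

lemma natCast_prod_cpow (S : Finset ℕ) (z : ℂ) :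
    ((∏ p ∈ S, p : ℕ) : ℂ) ^ z = ∏ p ∈ S, (p : ℂ) ^ z := by
  induction S using Finset.induction_on with
  | empty => simp
  | insert a T ha ih =>
    rw [prod_insert ha, prod_insert ha, Nat.cast_mul, Complex.natCast_mul_natCast_cpow, ih]

lemma mem_primesLe {x : ℝ} {p : ℕ} : p ∈ primesLe x ↔ p.Prime ∧ (p : ℝ) ≤ x := by
  simp only [primesLe, mem_filter, mem_range, Nat.lt_succ_iff, and_iff_right_iff_imp]
  exact fun h => Nat.le_floor h.2

noncomputable def partBelow (n p : ℕ) : ℕ :=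
  ∏ q ∈ n.primeFactors.filter (· < p), q ^ n.factorization q

lemma inB_iff (θ : ℕ → ℝ) (n : ℕ) :
    InB θ n ↔ 0 < n ∧ ∀ p ∈ n.primeFactors, (p : ℝ) ≤ θ (partBelow n p) := Iff.rfl

lemma primeFactors_mul_prime {n q : ℕ} (hn : n ≠ 0) (hq : q.Prime) :
    (n * q).primeFactors = insert q n.primeFactors := by
  rw [Nat.primeFactors_mul hn hq.ne_zero, hq.primeFactors, union_comm, insert_eq]

lemma partBelow_mul_prime {n q p : ℕ} (hn : n ≠ 0) (hq : q.Prime) (hpq : p ≤ q) :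
    partBelow (n * q) p = partBelow n p := by
  rw [partBelow, partBelow, primeFactors_mul_prime hn hq, filter_insert, if_neg (by omega)]
  refine prod_congr rfl fun r hr => ?_
  have hrq : q ≠ r := by have := (mem_filter.mp hr).2; omega
  rw [Nat.factorization_mul hn hq.ne_zero, Finsupp.add_apply, hq.factorization,
    Finsupp.single_apply, if_neg hrq, add_zero]

lemma partBelow_eq_self {n p : ℕ} (hn : n ≠ 0) (h : ∀ r ∈ n.primeFactors, r < p) :
    partBelow n p = n := by
  rw [partBelow, filter_true_of_mem h, ← Nat.support_factorization]
  exact Nat.prod_factorization_pow_eq_self hn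

lemma inB_mul_prime_iff {θ : ℕ → ℝ} (hθ : ∀ n : ℕ, 1 ≤ n → (n : ℝ) ≤ θ n) {n q : ℕ}
    (hn : 0 < n) (hq : q.Prime) (hle : ∀ p ∈ n.primeFactors, p ≤ q) :
    InB θ (n * q) ↔ InB θ n ∧ (q : ℝ) ≤ θ n := by
  have hlower : (∀ p ∈ n.primeFactors, (p : ℝ) ≤ θ (partBelow (n * q) p)) ↔
      ∀ p ∈ n.primeFactors, (p : ℝ) ≤ θ (partBelow n p) :=
    forall₂_congr fun p hp => by rw [partBelow_mul_prime hn.ne' hq (hle p hp)]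
  rw [inB_iff, inB_iff, primeFactors_mul_prime hn.ne' hq, forall_mem_insert, hlower,
    partBelow_mul_prime hn.ne' hq le_rfl]
  by_cases hqn : q ∣ n
  · have hqθ : (q : ℝ) ≤ θ n :=
      (Nat.cast_le.mpr (Nat.le_of_dvd hn hqn)).trans (hθ n hn)
    have hqmem : q ∈ n.primeFactors := Nat.mem_primeFactors.mpr ⟨hq, hqn, hn.ne'⟩
    exact ⟨fun h => ⟨⟨hn, h.2.2⟩, hqθ⟩,
      fun h => ⟨Nat.mul_pos hn hq.pos, h.1.2 q hqmem, h.1.2⟩⟩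
  · have hlt : ∀ r ∈ n.primeFactors, r < q := fun r hr =>
      (hle r hr).lt_of_ne fun h => hqn (h ▸ Nat.dvd_of_mem_primeFactors hr)
    rw [partBelow_eq_self hn.ne' hlt]
    exact ⟨fun h => ⟨⟨hn, h.2.2⟩, h.2.1⟩, fun h => ⟨Nat.mul_pos hn hq.pos, h.2, h.1.2⟩⟩

def Admissible (θ : ℕ → ℝ) (x : ℕ × Finset ℕ) : Prop :=
  InB θ x.1 ∧ x.2 ⊆ primesLe (θ x.1)

def pairProd (x : ℕ × Finset ℕ) : ℕ :=
  x.1 * ∏ p ∈ x.2, p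

noncomputable def weight (θ : ℕ → ℝ) (s : ℂ) (x : ℕ × Finset ℕ) : ℂ :=
  if Admissible θ x then (-1) ^ #x.2 * (pairProd x : ℂ) ^ (-s) else 0

namespace Admissible

variable {θ : ℕ → ℝ} {x : ℕ × Finset ℕ}

lemma prime (hx : Admissible θ x) {p : ℕ} (hp : p ∈ x.2) : p.Prime :=
  (mem_primesLe.mp (hx.2 hp)).1

lemma le_theta (hx : Admissible θ x) {p : ℕ} (hp : p ∈ x.2) : (p : ℝ) ≤ θ x.1 :=
  (mem_primesLe.mp (hx.2 hp)).2

lemma pairProd_pos (hx : Admissible θ x) : 0 < pairProd x :=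
  Nat.mul_pos hx.1.1 (prod_pos fun _ hp => (hx.prime hp).pos)

lemma primeFactors_fst_subset (hx : Admissible θ x) :
    x.1.primeFactors ⊆ (pairProd x).primeFactors :=
  Nat.primeFactors_mono (dvd_mul_right _ _) hx.pairProd_pos.ne'

lemma snd_subset_primeFactors (hx : Admissible θ x) : x.2 ⊆ (pairProd x).primeFactors :=
  fun _ hp => Nat.mem_primeFactors.mpr ⟨hx.prime hp,
    (dvd_prod_of_mem id hp).trans (dvd_mul_left _ _), hx.pairProd_pos.ne'⟩

lemma pairProd_eq_one_iff (hx : Admissible θ x) : pairProd x = 1 ↔ x = (1, ∅) := by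
  refine ⟨fun h => ?_, fun h => by simp [h, pairProd]⟩
  obtain ⟨h1, h2⟩ := mul_eq_one.mp h
  refine Prod.ext h1 ?_
  rw [← Nat.primeFactors_prod fun _ hp => hx.prime hp, h2, Nat.primeFactors_one]

lemma mem_or_dvd_of_prime_dvd (hx : Admissible θ x) {q : ℕ} (hq : q.Prime)
    (hqm : q ∣ pairProd x) : q ∈ x.2 ∨ q ∣ x.1 := by
  rcases (Nat.Prime.dvd_mul hq).mp hqm with h | h
  · exact .inr h
  · obtain ⟨p, hp, hqp⟩ := hq.prime.exists_mem_finset_dvd h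
    exact .inl ((Nat.prime_dvd_prime_iff_eq hq (hx.prime hp)).mp hqp ▸ hp)

end Admissible

def maxPrimeFactor (m : ℕ) : ℕ :=
  m.primeFactors.sup id

lemma maxPrimeFactor_mem_primeFactors {m : ℕ} (hm : 1 < m) :
    maxPrimeFactor m ∈ m.primeFactors := by
  obtain ⟨p, hp, h⟩ := exists_mem_eq_sup _ (Nat.nonempty_primeFactors.mpr hm) id
  rwa [maxPrimeFactor, h]

lemma le_maxPrimeFactor {m p : ℕ} (hp : p ∈ m.primeFactors) : p ≤ maxPrimeFactor m :=
  le_sup (f := id) hp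

def toggleAt (q : ℕ) (x : ℕ × Finset ℕ) : ℕ × Finset ℕ :=
  if q ∈ x.2 then (x.1 * q, x.2.erase q) else (x.1 / q, insert q x.2)

section toggleAt

variable {q : ℕ} {x : ℕ × Finset ℕ}

lemma neg_one_pow_card_toggleAt {R : Type*} [Ring R] :
    (-1 : R) ^ #(toggleAt q x).2 = -(-1) ^ #x.2 := by
  unfold toggleAt
  split_ifs with hq
  · rw [← card_erase_add_one hq, pow_succ, mul_neg_one, neg_neg]
  · rw [card_insert_of_notMem hq, pow_succ, mul_neg_one]

lemma pairProd_toggleAt (h : q ∈ x.2 ∨ q ∣ x.1) : pairProd (toggleAt q x) = pairProd x := by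
  unfold toggleAt pairProd
  split_ifs with hq <;> dsimp only
  · rw [mul_assoc, mul_prod_erase x.2 (fun p => p) hq]
  · rw [prod_insert hq, ← mul_assoc, Nat.div_mul_cancel (h.resolve_left hq)]

lemma toggleAt_toggleAt (hq : 0 < q) (h : q ∈ x.2 ∨ q ∣ x.1) :
    toggleAt q (toggleAt q x) = x := by
  by_cases hqS : q ∈ x.2
  · simp [toggleAt, hqS, Nat.mul_div_cancel _ hq, insert_erase hqS]
  · simp [toggleAt, hqS, Nat.div_mul_cancel (h.resolve_left hqS), erase_insert hqS]

lemma admissible_toggleAt {θ : ℕ → ℝ} (hθ : ∀ n : ℕ, 1 ≤ n → (n : ℝ) ≤ θ n)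
    (hx : Admissible θ x) (hq : q.Prime) (hfst : ∀ p ∈ x.1.primeFactors, p ≤ q)
    (hsnd : ∀ p ∈ x.2, p ≤ q) (h : q ∈ x.2 ∨ q ∣ x.1) : Admissible θ (toggleAt q x) := by
  obtain ⟨n, S⟩ := x
  have hn : 0 < n := hx.1.1
  unfold toggleAt
  split_ifs with hqS
  · have hB := (inB_mul_prime_iff hθ hn hq hfst).mpr ⟨hx.1, hx.le_theta hqS⟩
    refine ⟨hB, fun p hp => mem_primesLe.mpr ⟨hx.prime (mem_of_mem_erase hp), ?_⟩⟩
    calc (p : ℝ) ≤ (n * q : ℕ) :=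
          Nat.cast_le.mpr ((hsnd p (mem_of_mem_erase hp)).trans (Nat.le_mul_of_pos_left q hn))
      _ ≤ θ (n * q) := hθ _ (Nat.mul_pos hn hq.pos)
  · have hqn : q ∣ n := h.resolve_left hqS
    have hfst' : ∀ p ∈ (n / q).primeFactors, p ≤ q := fun p hp =>
      hfst p (Nat.primeFactors_mono (Nat.div_dvd_of_dvd hqn) hn.ne' hp)
    obtain ⟨hB, hqθ⟩ := (inB_mul_prime_iff hθ (Nat.div_pos (Nat.le_of_dvd hn hqn) hq.pos) hq
      hfst').mp (by rw [Nat.div_mul_cancel hqn]; exact hx.1)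
    refine ⟨hB, fun p hp => mem_primesLe.mpr ?_⟩
    rcases mem_insert.mp hp with rfl | hp
    · exact ⟨hq, hqθ⟩
    · exact ⟨hx.prime hp, (Nat.cast_le.mpr (hsnd p hp)).trans hqθ⟩

end toggleAt

section involution

variable {θ : ℕ → ℝ} {x : ℕ × Finset ℕ}

lemma Admissible.maxPrimeFactor_prime_and_mem_or_dvd (hx : Admissible θ x)
    (hm : pairProd x ≠ 1) :
    (maxPrimeFactor (pairProd x)).Prime ∧
      (maxPrimeFactor (pairProd x) ∈ x.2 ∨ maxPrimeFactor (pairProd x) ∣ x.1) := by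
  have hqm := maxPrimeFactor_mem_primeFactors
    (Nat.one_lt_iff_ne_zero_and_ne_one.mpr ⟨hx.pairProd_pos.ne', hm⟩)
  have hq := Nat.prime_of_mem_primeFactors hqm
  exact ⟨hq, hx.mem_or_dvd_of_prime_dvd hq (Nat.dvd_of_mem_primeFactors hqm)⟩

/-- The guard keeps the junk value `maxPrimeFactor 1 = 0` out of `toggleAt`. -/
noncomputable def pairInvolution (θ : ℕ → ℝ) (x : ℕ × Finset ℕ) : ℕ × Finset ℕ :=
  if Admissible θ x ∧ pairProd x ≠ 1 then toggleAt (maxPrimeFactor (pairProd x)) x else x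

lemma pairProd_pairInvolution : pairProd (pairInvolution θ x) = pairProd x := by
  unfold pairInvolution
  split_ifs with h
  · exact pairProd_toggleAt (h.1.maxPrimeFactor_prime_and_mem_or_dvd h.2).2
  · rfl

lemma Admissible.pairInvolution (hθ : ∀ n : ℕ, 1 ≤ n → (n : ℝ) ≤ θ n) (hx : Admissible θ x) :
    Admissible θ (pairInvolution θ x) := by
  unfold _root_.pairInvolution
  split_ifs with h
  · obtain ⟨hq, hmem⟩ := hx.maxPrimeFactor_prime_and_mem_or_dvd h.2
    exact admissible_toggleAt hθ hx hq
      (fun p hp => le_maxPrimeFactor (hx.primeFactors_fst_subset hp))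
      (fun p hp => le_maxPrimeFactor (hx.snd_subset_primeFactors hp)) hmem
  · exact hx

lemma pairInvolution_involutive (hθ : ∀ n : ℕ, 1 ≤ n → (n : ℝ) ≤ θ n) :
    Function.Involutive (pairInvolution θ) := by
  intro x
  by_cases h : Admissible θ x ∧ pairProd x ≠ 1
  · have hy : pairInvolution θ x = toggleAt (maxPrimeFactor (pairProd x)) x := if_pos h
    have hguard : Admissible θ (pairInvolution θ x) ∧ pairProd (pairInvolution θ x) ≠ 1 :=
      ⟨h.1.pairInvolution hθ, by rw [pairProd_pairInvolution]; exact h.2⟩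
    obtain ⟨hq, hmem⟩ := h.1.maxPrimeFactor_prime_and_mem_or_dvd h.2
    rw [pairInvolution, if_pos hguard, pairProd_pairInvolution, hy, toggleAt_toggleAt hq.pos hmem]
  · have hx : pairInvolution θ x = x := if_neg h
    rw [hx, hx]

lemma weight_pairInvolution (hθ : ∀ n : ℕ, 1 ≤ n → (n : ℝ) ≤ θ n) (s : ℂ)
    (hx : Admissible θ x) (hm : pairProd x ≠ 1) :
    weight θ s (pairInvolution θ x) = -weight θ s x := by
  rw [weight, weight, if_pos (hx.pairInvolution hθ), if_pos hx, pairProd_pairInvolution,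
    pairInvolution, if_pos ⟨hx, hm⟩, neg_one_pow_card_toggleAt, neg_mul]

end involution

section weight

variable {θ : ℕ → ℝ} {s : ℂ}

lemma weight_eq_zero_of_notMem_powerset {n : ℕ} {S : Finset ℕ}
    (hS : S ∉ (primesLe (θ n)).powerset) : weight θ s (n, S) = 0 :=
  if_neg fun h => hS (mem_powerset.mpr h.2)

lemma sum_powerset_weight (n : ℕ) :
    ∑ S ∈ (primesLe (θ n)).powerset, weight θ s (n, S) =
      if InB θ n then (n : ℂ) ^ (-s) * ∏ p ∈ primesLe (θ n), (1 - (p : ℂ) ^ (-s)) else 0 := by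
  split_ifs with hB
  · rw [prod_sub (fun _ : ℕ => (1 : ℂ)) (fun p : ℕ => (p : ℂ) ^ (-s)), mul_sum]
    refine sum_congr rfl fun S hS => ?_
    rw [weight, if_pos ⟨hB, mem_powerset.mp hS⟩, pairProd, Nat.cast_mul,
      Complex.natCast_mul_natCast_cpow, natCast_prod_cpow, prod_const_one, mul_one]
    ring
  · exact sum_eq_zero fun S _ => if_neg fun h => hB h.1

lemma Admissible.norm_weight {x : ℕ × Finset ℕ} (hx : Admissible θ x) :
    ‖weight θ s x‖ = (x.1 : ℝ) ^ (-s.re) * ((∏ p ∈ x.2, p : ℕ) : ℝ) ^ (-s.re) := by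
  rw [weight, if_pos hx, norm_mul, norm_pow, norm_neg, norm_one, one_pow, one_mul,
    Complex.norm_natCast_cpow_of_pos hx.pairProd_pos, Complex.neg_re, pairProd, Nat.cast_mul,
    Real.mul_rpow (Nat.cast_nonneg _) (Nat.cast_nonneg _)]

lemma summable_weight (hs : 1 < s.re) : Summable (weight θ s) := by
  have hζ : Summable fun n : ℕ => (n : ℝ) ^ (-s.re) := Real.summable_nat_rpow.mpr (by linarith)
  have hζζ : Summable fun y : ℕ × ℕ => (y.1 : ℝ) ^ (-s.re) * (y.2 : ℝ) ^ (-s.re) :=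
    hζ.mul_of_nonneg hζ (fun _ => by positivity) (fun _ => by positivity)
  have hinj : Function.Injective fun x : {x // Admissible θ x} => (x.1.1, ∏ p ∈ x.1.2, p) := by
    rintro ⟨⟨n, S⟩, hx⟩ ⟨⟨n', S'⟩, hx'⟩ h
    obtain ⟨rfl, hprod⟩ := Prod.mk.inj h
    have hS : S = S' := by
      rw [← Nat.primeFactors_prod fun _ (hp : _ ∈ S) => hx.prime hp,
        ← Nat.primeFactors_prod fun _ (hp : _ ∈ S') => hx'.prime hp]
      exact congrArg Nat.primeFactors hprod
    subst hS
    rfl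
  refine (Subtype.val_injective.summable_iff fun x hx => ?_).mp
    ((hζζ.comp_injective hinj).of_norm_bounded fun x => (x.2.norm_weight).le)
  exact if_neg fun h => hx ⟨⟨x, h⟩, rfl⟩

lemma tsum_weight_eq_tsum_inB (hs : 1 < s.re) :
    ∑' x, weight θ s x = ∑' n : ℕ,
      if InB θ n then (n : ℂ) ^ (-s) * ∏ p ∈ primesLe (θ n), (1 - (p : ℂ) ^ (-s)) else 0 := by
  rw [(summable_weight hs).tsum_prod' fun n =>
    summable_of_ne_finset_zero fun S hS => weight_eq_zero_of_notMem_powerset hS]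
  refine tsum_congr fun n => ?_
  rw [tsum_eq_sum fun S hS => weight_eq_zero_of_notMem_powerset hS, sum_powerset_weight]

lemma tsum_weight_eq_one (hθ : ∀ n : ℕ, 1 ≤ n → (n : ℝ) ≤ θ n) (hs : 1 < s.re) :
    ∑' x, weight θ s x = 1 := by
  have hne : ∀ y : ℕ × Finset ℕ, pairProd y ≠ 1 → y ≠ (1, ∅) := by
    rintro y hy rfl
    exact hy (by simp [pairProd])
  have hodd : ∀ x, (if pairInvolution θ x = (1, ∅) then 0 else weight θ s (pairInvolution θ x)) =
      -if x = (1, ∅) then 0 else weight θ s x := by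
    intro x
    by_cases h : Admissible θ x ∧ pairProd x ≠ 1
    · rw [if_neg (hne _ (by rw [pairProd_pairInvolution]; exact h.2)), if_neg (hne x h.2),
        weight_pairInvolution hθ s h.1 h.2]
    · have hzero : (if x = (1, ∅) then 0 else weight θ s x) = 0 := by
        split_ifs with h1
        · rfl
        · exact if_neg fun hx => h1 (hx.pairProd_eq_one_iff.mp (not_and_not_right.mp h hx))
      rw [show pairInvolution θ x = x from if_neg h, hzero, neg_zero]
  rw [(summable_weight hs).tsum_eq_add_tsum_ite (1, ∅),
    tsum_eq_zero_of_involutive (pairInvolution_involutive hθ) hodd, add_zero, weight,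
    if_pos ⟨⟨one_pos, by simp⟩, empty_subset _⟩]
  simp [pairProd]

end weight

theorem dirichlet_identity_B_general (θ : ℕ → ℝ)
    (hθ : ∀ n : ℕ, 1 ≤ n → (n : ℝ) ≤ θ n) (s : ℂ) (hs : 1 < s.re) :
    (1 : ℂ) = ∑' n : ℕ,
      if InB θ n then (n : ℂ) ^ (-s) * ∏ p ∈ primesLe (θ n), (1 - (p : ℂ) ^ (-s))
      else 0 := by
  rw [← tsum_weight_eq_tsum_inB hs, tsum_weight_eq_one hθ hs]

/-- For `Re(s) > 1`,
`1 = ∑_{n ∈ B_θ} n^{-s} ∏_{p ≤ θ(n)} (1 - p^{-s})`. -/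
theorem dirichlet_identity_B (θ : ℕ → ℝ) (hθ1 : 2 ≤ θ 1)
    (hθ : ∀ n : ℕ, 1 ≤ n → (n : ℝ) ≤ θ n) (s : ℂ) (hs : 1 < s.re) :
    (1 : ℂ) = ∑' n : ℕ,
      if InB θ n then (n : ℂ) ^ (-s) * ∏ p ∈ primesLe (θ n), (1 - (p : ℂ) ^ (-s))
      else 0 :=
  dirichlet_identity_B_general θ hθ s hs
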